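/- Let s ∈ (1/2, 1). There exists a constant C > 0 such that for every bounded continuous 2π-periodic function u : ℝ → ℝⁿ with N_s(u) < ∞ and every G ∈ C¹(ℝⁿ; ℝⁿ) with ‖G_u‖_{C¹} := sup{ |G(x)| + |∇G(x)| : |x| ≤ ‖u‖_{L^∞} } < ∞, one has N_s(G ∘ u) ≤ C ‖G_u‖_{C¹} (1 + N_s(u)). -/

import Mathlib

/-!
For `s < 1` only first differences of `v` enter `N_s(v)`, so no cancellation is needed: on the
range of `u`, `G` is bounded by `M = ‖G_u‖_{C¹}` and, by the mean value theorem, `M`-Lipschitz.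
The first bound controls `‖G ∘ u‖_{L²}` by `M √(2π)`; the second gives
`‖G ∘ u - τ_h (G ∘ u)‖_{L²} ≤ M ‖u - τ_h u‖_{L²}` for every `h`, hence the same bound for the
Slobodeckij part of the norm.
-/

open MeasureTheory Real ENNReal

/-- The squared `L²` norm over one period `[0,2π]`. -/
noncomputable def l2sq {n : ℕ} (v : ℝ → EuclideanSpace ℝ (Fin n)) : ℝ≥0∞ :=
  ∫⁻ x in Set.Ioc (0 : ℝ) (2 * π), ENNReal.ofReal (‖v x‖ ^ 2)

/-- The Slobodeckij-type norm
`N_s(v) = ‖v‖_{L²} + (∫₀¹ [t^{-s} sup_{|h|<t} ‖v - τ_h v‖_{L²}]² dt/t)^{1/2}`. -/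
noncomputable def slobNorm {n : ℕ} (s : ℝ) (v : ℝ → EuclideanSpace ℝ (Fin n)) : ℝ≥0∞ :=
  l2sq v ^ (1 / 2 : ℝ) +
    (∫⁻ t in Set.Ioc (0 : ℝ) 1,
        (ENNReal.ofReal (t ^ (-s)) *
            ⨆ h ∈ Set.Ioo (-t) t, l2sq (fun x => v x - v (x - h)) ^ (1 / 2 : ℝ)) ^ 2 /
          ENNReal.ofReal t) ^ (1 / 2 : ℝ)

/-- `‖G_u‖_{C¹} = sup { |G(x)| + |∇G(x)| : |x| ≤ R }`. -/
noncomputable def C1normOn {n : ℕ}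
    (G : EuclideanSpace ℝ (Fin n) → EuclideanSpace ℝ (Fin n)) (R : ℝ) : ℝ :=
  ⨆ x ∈ {y : EuclideanSpace ℝ (Fin n) | ‖y‖ ≤ R}, (‖G x‖ + ‖fderiv ℝ G x‖)

theorem Function.Periodic.bddAbove_range_norm {E : Type*} [SeminormedAddCommGroup E]
    {f : ℝ → E} {c : ℝ} (hp : Function.Periodic f c) (hc : c ≠ 0) (hf : Continuous f) :
    BddAbove (Set.range fun x => ‖f x‖) := by
  simpa only [Set.range_comp'] using
    ((hp.compact_of_continuous hc hf).image continuous_norm).bddAbove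

theorem IsCompact.le_biSup_of_continuousOn {X : Type*} [TopologicalSpace X] {K : Set X}
    (hK : IsCompact K) {f : X → ℝ} (hf : ContinuousOn f K) {x : X} (hx : x ∈ K) :
    f x ≤ ⨆ y ∈ K, f y := by
  refine le_ciSup₂ (f := fun y (_ : y ∈ K) => f y) ((hK.bddAbove_image hf).mono ?_) x hx
  rintro _ ⟨_, ⟨y, rfl⟩, ⟨hy, rfl⟩⟩
  exact ⟨y, hy, rfl⟩

section C1Norm

variable {n : ℕ} {G : EuclideanSpace ℝ (Fin n) → EuclideanSpace ℝ (Fin n)} {R : ℝ}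

theorem norm_add_norm_fderiv_le_C1normOn (hG : ContDiff ℝ 1 G)
    {y : EuclideanSpace ℝ (Fin n)} (hy : ‖y‖ ≤ R) :
    ‖G y‖ + ‖fderiv ℝ G y‖ ≤ C1normOn G R := by
  have hK : {y : EuclideanSpace ℝ (Fin n) | ‖y‖ ≤ R} = Metric.closedBall 0 R := by
    ext
    simp
  unfold C1normOn
  rw [hK]
  exact (isCompact_closedBall 0 R).le_biSup_of_continuousOn
    (f := fun y => ‖G y‖ + ‖fderiv ℝ G y‖)
    (hG.continuous.norm.add (hG.continuous_fderiv one_ne_zero).norm).continuousOn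
    (mem_closedBall_zero_iff.2 hy)

theorem C1normOn_nonneg (hG : ContDiff ℝ 1 G) (hR : 0 ≤ R) : 0 ≤ C1normOn G R :=
  (by positivity : (0 : ℝ) ≤ ‖G 0‖ + ‖fderiv ℝ G 0‖).trans
    (norm_add_norm_fderiv_le_C1normOn hG (by simpa using hR))

theorem norm_le_C1normOn (hG : ContDiff ℝ 1 G) {y : EuclideanSpace ℝ (Fin n)} (hy : ‖y‖ ≤ R) :
    ‖G y‖ ≤ C1normOn G R :=
  (le_add_of_nonneg_right (norm_nonneg _)).trans (norm_add_norm_fderiv_le_C1normOn hG hy)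

theorem norm_sub_le_C1normOn_mul (hG : ContDiff ℝ 1 G) {a b : EuclideanSpace ℝ (Fin n)}
    (ha : ‖a‖ ≤ R) (hb : ‖b‖ ≤ R) : ‖G a - G b‖ ≤ C1normOn G R * ‖a - b‖ :=
  (convex_closedBall (0 : EuclideanSpace ℝ (Fin n)) R).norm_image_sub_le_of_norm_fderiv_le
    (fun x _ => hG.differentiable one_ne_zero x)
    (fun _ hy => (le_add_of_nonneg_left (norm_nonneg _)).trans
      (norm_add_norm_fderiv_le_C1normOn hG (mem_closedBall_zero_iff.1 hy)))
    (mem_closedBall_zero_iff.2 hb) (mem_closedBall_zero_iff.2 ha)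

end C1Norm

section L2

variable {n m : ℕ}

theorem ENNReal.ofReal_sq_rpow_half {c : ℝ} (hc : 0 ≤ c) :
    ENNReal.ofReal (c ^ 2) ^ (1 / 2 : ℝ) = ENNReal.ofReal c := by
  rw [ENNReal.ofReal_rpow_of_nonneg (by positivity) (by norm_num), ← Real.sqrt_eq_rpow,
    Real.sqrt_sq hc]

theorem l2sq_rpow_half_le_of_norm_le {v : ℝ → EuclideanSpace ℝ (Fin n)} {M : ℝ}
    (hv : ∀ x, ‖v x‖ ≤ M) : l2sq v ^ (1 / 2 : ℝ) ≤ ENNReal.ofReal (M * √(2 * π)) := by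
  have hM : 0 ≤ M := (norm_nonneg _).trans (hv 0)
  have hsq : l2sq v ≤ ENNReal.ofReal ((M * √(2 * π)) ^ 2) := by
    rw [mul_pow, Real.sq_sqrt (by positivity), ENNReal.ofReal_mul (by positivity),
      ← sub_zero (2 * π), ← Real.volume_Ioc, ← setLIntegral_const]
    exact lintegral_mono fun x =>
      ENNReal.ofReal_le_ofReal (pow_le_pow_left₀ (norm_nonneg _) (hv x) 2)
  calc l2sq v ^ (1 / 2 : ℝ) ≤ ENNReal.ofReal ((M * √(2 * π)) ^ 2) ^ (1 / 2 : ℝ) :=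
        ENNReal.rpow_le_rpow hsq (by norm_num)
    _ = ENNReal.ofReal (M * √(2 * π)) := ENNReal.ofReal_sq_rpow_half (by positivity)

theorem l2sq_rpow_half_le_mul {v : ℝ → EuclideanSpace ℝ (Fin n)}
    {w : ℝ → EuclideanSpace ℝ (Fin m)} {M : ℝ} (hM : 0 ≤ M) (hvw : ∀ x, ‖v x‖ ≤ M * ‖w x‖) :
    l2sq v ^ (1 / 2 : ℝ) ≤ ENNReal.ofReal M * l2sq w ^ (1 / 2 : ℝ) := by
  have hsq : l2sq v ≤ ENNReal.ofReal (M ^ 2) * l2sq w := by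
    rw [l2sq, l2sq, ← lintegral_const_mul' _ _ ENNReal.ofReal_ne_top]
    refine lintegral_mono fun x => ?_
    rw [← ENNReal.ofReal_mul (by positivity), ← mul_pow]
    exact ENNReal.ofReal_le_ofReal (pow_le_pow_left₀ (norm_nonneg _) (hvw x) 2)
  calc l2sq v ^ (1 / 2 : ℝ) ≤ (ENNReal.ofReal (M ^ 2) * l2sq w) ^ (1 / 2 : ℝ) :=
        ENNReal.rpow_le_rpow hsq (by norm_num)
    _ = ENNReal.ofReal M * l2sq w ^ (1 / 2 : ℝ) := by
        rw [ENNReal.mul_rpow_of_nonneg _ _ (by norm_num), ENNReal.ofReal_sq_rpow_half hM]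

end L2

section Slobodeckij

variable {n m : ℕ}

noncomputable def translationModulus (v : ℝ → EuclideanSpace ℝ (Fin n)) (t : ℝ) : ℝ≥0∞ :=
  ⨆ h ∈ Set.Ioo (-t) t, l2sq (fun x => v x - v (x - h)) ^ (1 / 2 : ℝ)

noncomputable def slobSeminorm (s : ℝ) (v : ℝ → EuclideanSpace ℝ (Fin n)) : ℝ≥0∞ :=
  (∫⁻ t in Set.Ioc (0 : ℝ) 1,
      (ENNReal.ofReal (t ^ (-s)) * translationModulus v t) ^ 2 / ENNReal.ofReal t) ^ (1 / 2 : ℝ)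

theorem slobNorm_eq (s : ℝ) (v : ℝ → EuclideanSpace ℝ (Fin n)) :
    slobNorm s v = l2sq v ^ (1 / 2 : ℝ) + slobSeminorm s v := rfl

theorem slobSeminorm_le_mul {s : ℝ} {v : ℝ → EuclideanSpace ℝ (Fin n)}
    {w : ℝ → EuclideanSpace ℝ (Fin m)} {c : ℝ≥0∞} (hc : c ≠ ⊤)
    (hvw : ∀ h, l2sq (fun x => v x - v (x - h)) ^ (1 / 2 : ℝ) ≤
      c * l2sq (fun x => w x - w (x - h)) ^ (1 / 2 : ℝ)) :
    slobSeminorm s v ≤ c * slobSeminorm s w := by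
  have hmod : ∀ t, translationModulus v t ≤ c * translationModulus w t := fun t => by
    simp only [translationModulus, ENNReal.mul_iSup]
    exact iSup₂_mono fun h _ => hvw h
  have hint : ∀ t : ℝ,
      (ENNReal.ofReal (t ^ (-s)) * translationModulus v t) ^ 2 / ENNReal.ofReal t ≤
      c ^ 2 * ((ENNReal.ofReal (t ^ (-s)) * translationModulus w t) ^ 2 / ENNReal.ofReal t) :=
    fun t => by
      rw [← mul_div_assoc, ← mul_pow, mul_left_comm]
      gcongr
      exact hmod t
  calc slobSeminorm s v
      ≤ (c ^ 2 * ∫⁻ t in Set.Ioc (0 : ℝ) 1,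
          (ENNReal.ofReal (t ^ (-s)) * translationModulus w t) ^ 2 / ENNReal.ofReal t) ^
            (1 / 2 : ℝ) :=
        ENNReal.rpow_le_rpow ((lintegral_mono hint).trans_eq
          (lintegral_const_mul' _ _ (ENNReal.pow_ne_top hc))) (by norm_num)
    _ = c * slobSeminorm s w := by
        rw [ENNReal.mul_rpow_of_nonneg _ _ (by norm_num), ← ENNReal.rpow_natCast,
          ← ENNReal.rpow_mul]
        norm_num [slobSeminorm]

end Slobodeckij

theorem stmt_2_general (s : ℝ) (n : ℕ) :
    ∃ C > 0, ∀ (u : ℝ → EuclideanSpace ℝ (Fin n))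
      (G : EuclideanSpace ℝ (Fin n) → EuclideanSpace ℝ (Fin n)),
      Continuous u → Function.Periodic u (2 * π) → slobNorm s u ≠ ⊤ →
      ContDiff ℝ 1 G →
      slobNorm s (fun x => G (u x)) ≤
        ENNReal.ofReal (C * C1normOn G (⨆ x, ‖u x‖)) * (1 + slobNorm s u) := by
  refine ⟨1 + √(2 * π), by positivity, fun u G hu hper _ hG => ?_⟩
  set M := C1normOn G (⨆ x, ‖u x‖)
  have hu_le : ∀ x, ‖u x‖ ≤ ⨆ x, ‖u x‖ :=
    le_ciSup (hper.bddAbove_range_norm (by positivity) hu)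
  have hM : 0 ≤ M := C1normOn_nonneg hG ((norm_nonneg _).trans (hu_le 0))
  have hL2 : l2sq (fun x => G (u x)) ^ (1 / 2 : ℝ) ≤ ENNReal.ofReal (M * √(2 * π)) :=
    l2sq_rpow_half_le_of_norm_le fun x => norm_le_C1normOn hG (hu_le x)
  have hsemi : slobSeminorm s (fun x => G (u x)) ≤ ENNReal.ofReal M * slobSeminorm s u :=
    slobSeminorm_le_mul ENNReal.ofReal_ne_top fun h => l2sq_rpow_half_le_mul hM fun x =>
      norm_sub_le_C1normOn_mul hG (hu_le x) (hu_le (x - h))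
  have hC : ∀ a ≤ 1 + √(2 * π), ENNReal.ofReal (M * a) ≤ ENNReal.ofReal ((1 + √(2 * π)) * M) :=
    fun a ha => ENNReal.ofReal_le_ofReal (by nlinarith)
  calc slobNorm s (fun x => G (u x))
      ≤ ENNReal.ofReal (M * √(2 * π)) + ENNReal.ofReal M * slobSeminorm s u :=
        (slobNorm_eq s _).trans_le (add_le_add hL2 hsemi)
    _ ≤ ENNReal.ofReal ((1 + √(2 * π)) * M) * (1 + slobNorm s u) := by
        rw [mul_add, mul_one]
        refine add_le_add (hC _ (by linarith)) (mul_le_mul' ?_ (slobNorm_eq s u ▸ le_add_self))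
        simpa using hC 1 (by linarith [Real.sqrt_nonneg (2 * π)])

/-- Composition estimate in fractional Sobolev norm:
`N_s(G ∘ u) ≤ C ‖G_u‖_{C¹} (1 + N_s(u))`. -/
theorem stmt_2 (s : ℝ) (hs : s ∈ Set.Ioo (1 / 2 : ℝ) 1) (n : ℕ) :
    ∃ C > 0, ∀ (u : ℝ → EuclideanSpace ℝ (Fin n))
      (G : EuclideanSpace ℝ (Fin n) → EuclideanSpace ℝ (Fin n)),
      Continuous u → Function.Periodic u (2 * π) → slobNorm s u ≠ ⊤ →
      ContDiff ℝ 1 G →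
      slobNorm s (fun x => G (u x)) ≤
        ENNReal.ofReal (C * C1normOn G (⨆ x, ‖u x‖)) * (1 + slobNorm s u) :=
  stmt_2_general s n
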